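/- Let S^sym be the WSTTS of a signal σ and a TSWA W. For any symbolic states (l,Z₁,ā),(l',Z₁',ā') ∈ Q^sym with ((l,Z₁,ā),(l',Z₁',ā')) ∈ →^sym, and any (l,Z₂,ā) ∈ Q^sym with Z₁ ⊆ Z₂, there exists (l',Z₂',ā') ∈ Q^sym such that Z₁' ⊆ Z₂' and ((l,Z₂,ā),(l',Z₂',ā')) ∈ →^sym. -/

import Mathlib

attribute [local instance] Classical.propDecidable

namespace QTPM

/-- Comparison operators `<, ≤, >, ≥` used in constraints, guards and zones. -/
inductive CmpOp : Type
  | lt | le | gt | ge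

/-- Semantics of a comparison operator on reals. -/
def CmpOp.eval : CmpOp → ℝ → ℝ → Prop
  | .lt, a, b => a < b
  | .le, a, b => a ≤ b
  | .gt, a, b => a > b
  | .ge, a, b => a ≥ b

/-- A semiring `𝕊 = (S, ⊕, ⊗, e⊕, e⊗)`: `(S,⊕,e⊕)` a commutative monoid,
`(S,⊗,e⊗)` a monoid, `⊗` distributing over `⊕` on both sides, `e⊕` absorbing for `⊗`. -/
class CSemiring (S : Type) : Type where
  add : S → S → S
  mul : S → S → S
  zero : S
  one : S
  add_assoc : ∀ a b c : S, add (add a b) c = add a (add b c)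
  add_comm : ∀ a b : S, add a b = add b a
  add_zero : ∀ a : S, add a zero = a
  mul_assoc : ∀ a b c : S, mul (mul a b) c = mul a (mul b c)
  mul_one : ∀ a : S, mul a one = a
  one_mul : ∀ a : S, mul one a = a
  left_distrib : ∀ a b c : S, mul a (add b c) = add (mul a b) (mul a c)
  right_distrib : ∀ a b c : S, mul (add a b) c = add (mul a c) (mul b c)
  zero_mul : ∀ a : S, mul zero a = zero
  mul_zero : ∀ a : S, mul a zero = zero

/-- A semiring is idempotent if `s ⊕ s = s` for every `s`. -/
def Idem (S : Type) [CSemiring S] : Prop := ∀ s : S, CSemiring.add s s = s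

/-- The canonical order of a semiring: `s ⪯ s'` iff `s ⊕ s' = s'`. -/
def csLe {S : Type} [CSemiring S] (s s' : S) : Prop := CSemiring.add s s' = s'

/-- A complete semiring: every (possibly infinite) family has a sum `⊕`, extending the
binary sum, invariant under partitions of the index set, and over which `⊗` distributes
on both sides. -/
class CompleteCSemiring (S : Type) [CSemiring S] : Type 1 where
  iSum : {ι : Type} → (ι → S) → S
  iSum_empty : ∀ f : Empty → S, iSum f = CSemiring.zero
  iSum_single : ∀ f : Unit → S, iSum f = f ()
  iSum_pair : ∀ f : Bool → S, iSum f = CSemiring.add (f true) (f false)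
  iSum_partition : ∀ {ι κ : Type} (p : ι → κ) (f : ι → S),
    iSum f = iSum fun k : κ => iSum fun i : {i : ι // p i = k} => f i.1
  mul_iSum : ∀ {ι : Type} (s : S) (f : ι → S),
    CSemiring.mul s (iSum f) = iSum fun i => CSemiring.mul s (f i)
  iSum_mul : ∀ {ι : Type} (f : ι → S) (s : S),
    CSemiring.mul (iSum f) s = iSum fun i => CSemiring.mul (f i) s

/-- A piecewise-constant signal `σ = a₁^{τ₁} ⋯ a_n^{τ_n}`: a finite list of
(value, duration) pairs with positive durations. -/
structure Signal (X : Type) : Type where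
  entries : List ((X → ℝ) × ℝ)
  pos : ∀ e ∈ entries, (0:ℝ) < e.2

namespace Signal

variable {X : Type}

/-- A default entry, used as a fallback value for out-of-range indexing. -/
noncomputable def dflt (X : Type) : (X → ℝ) × ℝ := (fun _ => 0, 1)

/-- Prefix sums of the durations: `pref σ i = τ₁ + ⋯ + τᵢ`. -/
noncomputable def pref (σ : Signal X) (i : ℕ) : ℝ := ((σ.entries.take i).map Prod.snd).sum

/-- The duration `|σ| = τ₁ + ⋯ + τ_n` of a signal. -/
noncomputable def dur (σ : Signal X) : ℝ := (σ.entries.map Prod.snd).sum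

/-- The number `n` of entries of the signal. -/
def len (σ : Signal X) : ℕ := σ.entries.length

/-- The value `a_{i+1}` of the `i`-th entry (0-indexed). -/
noncomputable def val (σ : Signal X) (i : ℕ) : X → ℝ := (σ.entries.getD i (dflt X)).1

/-- The value `σ(t)` of the signal at time `t`: the value `a_k` where
`τ₁+⋯+τ_{k-1} ≤ t < τ₁+⋯+τ_k`. -/
noncomputable def valAt (σ : Signal X) (t : ℝ) : X → ℝ :=
  σ.val ((List.range σ.len).findIdx fun i => decide (t < σ.pref (i+1)))

end Signal

/-- Stutter-free sequences: the elements of `(ℝ^X)^⊛` (no two equal consecutive values). -/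
def StutterFree {V : Type} (l : List V) : Prop := l.Chain' (· ≠ ·)

/-- Absorbing concatenation `∘` of (stutter-free) sequences: concatenate and merge
equal consecutive elements. -/
noncomputable def absCat {V : Type} (l l' : List V) : List V :=
  List.destutter (· ≠ ·) (l ++ l')

/-- `Values(σ([t,t')))`: the stutter-free sequence of values of `σ` on the
interval `[t,t')`. -/
noncomputable def Signal.valuesOn {X : Type} (σ : Signal X) (t t' : ℝ) : List (X → ℝ) :=
  List.destutter (· ≠ ·)
    (((List.range σ.len).filter fun i => decide (σ.pref i < t' ∧ t < σ.pref (i+1))).map σ.val)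

/-- The restriction `σ([t,t'))` of a signal to the interval `[t,t')`. -/
noncomputable def Signal.restrict {X : Type} (σ : Signal X) (t t' : ℝ) : Signal X where
  entries := (List.range σ.len).filterMap fun i =>
    if h : max (σ.pref i) t < min (σ.pref (i+1)) t' then
      some (σ.val i, min (σ.pref (i+1)) t' - max (σ.pref i) t)
    else none
  pos := by
    intro e he
    rw [List.mem_filterMap] at he
    obtain ⟨i, -, hi⟩ := he
    by_cases h : max (σ.pref i) t < min (σ.pref (i+1)) t'
    · rw [dif_pos h] at hi
      injection hi with h'
      subst h'
      simpa using sub_pos.mpr h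
    · rw [dif_neg h] at hi
      exact absurd hi (by simp)

/-- The constant signal `a^t`. -/
noncomputable def constSignal {X : Type} (a : X → ℝ) (t : ℝ) : Signal X where
  entries := if h : (0:ℝ) < t then [(a, t)] else []
  pos := by
    intro e he
    by_cases h : (0:ℝ) < t
    · rw [dif_pos h] at he
      simp only [List.mem_singleton] at he
      subst he
      exact h
    · rw [dif_neg h] at he
      simp at he

/-- Clock guards: finite conjunctions of `c ⋈ d` with `d ∈ ℤ≥0`. -/
abbrev Guard (C : Type) : Type := List (C × CmpOp × ℕ)

/-- Constraints over the variables `X`: finite conjunctions of `x ⋈ d` with `d ∈ ℝ`. -/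
abbrev VarConstraint (X : Type) : Type := List (X × CmpOp × ℝ)

/-- A timed symbolic automaton (TSA) over `ℝ`, with locations `L` and clocks `C`. -/
structure TSA (X L C : Type) : Type where
  L₀ : Set L
  LF : Set L
  Δ : Set (L × Guard C × Set C × L)
  Δ_finite : Δ.Finite
  Λ : L → VarConstraint X

/-- A timed symbolic weighted automaton (TSWA) over `ℝ` and a complete semiring `S`:
a TSA together with a cost function `κ`. -/
structure TSWA (X L C S : Type) [CSemiring S] [CompleteCSemiring S]
    extends TSA X L C : Type where
  κ : VarConstraint X → List (X → ℝ) → S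

/-- Satisfaction `ν ⊨ g` of a clock guard. -/
def guardSat {C : Type} (ν : C → ℝ) (g : Guard C) : Prop :=
  ∀ p ∈ g, p.2.1.eval (ν p.1) (p.2.2 : ℝ)

/-- The reset `ν[ρ := 0]` of a clock valuation. -/
noncomputable def resetVal {C : Type} (ν : C → ℝ) (ρ : Set C) : C → ℝ :=
  fun c => if c ∈ ρ then 0 else ν c

/-- States of the WTTS: `(l, ν, t, ā)`. -/
abbrev WState (X L C : Type) : Type := L × (C → ℝ) × ℝ × List (X → ℝ)

/-- The state space `Q` of the WTTS of `σ` and a TSWA. -/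
def wttsQ {X L C : Type} (σ : Signal X) : Set (WState X L C) :=
  {q | (∀ c, 0 ≤ q.2.1 c) ∧ 0 ≤ q.2.2.1 ∧ q.2.2.1 ≤ σ.dur ∧ StutterFree q.2.2.2}

/-- The initial states `Q₀ = {(l₀, 0⃗, 0, ε) | l₀ ∈ L₀}` of the WTTS. -/
def wttsQ0 {X L C : Type} (A : TSA X L C) : Set (WState X L C) :=
  {q | q.1 ∈ A.L₀ ∧ q.2.1 = (fun _ => 0) ∧ q.2.2.1 = 0 ∧ q.2.2.2 = []}

/-- The accepting states `Q_F = {(l_F, ν, |σ|, ε) | l_F ∈ L_F}` of the WTTS. -/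
def wttsQF {X L C : Type} (σ : Signal X) (A : TSA X L C) : Set (WState X L C) :=
  {q | q.1 ∈ A.LF ∧ (∀ c, 0 ≤ q.2.1 c) ∧ q.2.2.1 = σ.dur ∧ q.2.2.2 = []}

/-- The transition relation `→` of the WTTS of `σ` and (the TSA of) a TSWA:
either a discrete transition of the TSA, or time elapse. -/
def wttsStep {X L C : Type} (σ : Signal X) (A : TSA X L C)
    (q q' : WState X L C) : Prop :=
  q ∈ wttsQ σ ∧ q' ∈ wttsQ σ ∧
  ((∃ g ρ, (q.1, g, ρ, q'.1) ∈ A.Δ ∧ guardSat q.2.1 g ∧ q'.2.1 = resetVal q.2.1 ρ ∧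
      q'.2.2.1 = q.2.2.1 ∧ q.2.2.2 ≠ [] ∧ q'.2.2.2 = []) ∨
   (q.1 = q'.1 ∧ ∃ τ : ℝ, 0 < τ ∧ q'.2.1 = (fun c => q.2.1 c + τ) ∧
      q'.2.2.1 = q.2.2.1 + τ ∧
      q'.2.2.2 = absCat q.2.2.2 (σ.valuesOn q.2.2.1 (q.2.2.1 + τ))))

/-- The weight of a WTTS transition: `κ(Λ(l), ā)` if `ā' = ε`, and `e⊗` otherwise. -/
noncomputable def wttsWeight {X L C S : Type} [CSemiring S] [CompleteCSemiring S]
    (W : TSWA X L C S) (q q' : WState X L C) : S :=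
  if q'.2.2.2 = [] then W.κ (W.Λ q.1) q.2.2.2 else CSemiring.one

/-- A path of a transition system: a finite sequence of states related by
consecutive transitions. -/
def IsPath {Q : Type} (step : Q → Q → Prop) (π : List Q) : Prop := π.Chain' step

/-- The path value: the `⊗`-product of the weights of the transitions of a path. -/
noncomputable def pathVal {Q S : Type} [CSemiring S] [CompleteCSemiring S]
    (w : Q → Q → S) : List Q → S
  | [] => CSemiring.one
  | [_] => CSemiring.one
  | q :: q' :: r => CSemiring.mul (w q q') (pathVal w (q' :: r))

/-- The set of paths from a state of `A` to a state of `B`. -/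
def PathsBetween {Q : Type} (step : Q → Q → Prop) (A B : Set Q) : Set (List Q) :=
  {π | IsPath step π ∧ (∃ a ∈ A, π.head? = some a) ∧ (∃ b ∈ B, π.getLast? = some b)}

/-- The shortest distance from `A` to `B`: the `⊕`-sum, over all paths from `A` to `B`,
of the `⊗`-product of the transition weights. -/
noncomputable def sDist {Q S : Type} [CSemiring S] [CompleteCSemiring S]
    (step : Q → Q → Prop) (w : Q → Q → S) (A B : Set Q) : S :=
  CompleteCSemiring.iSum fun π : ↥(PathsBetween step A B) => pathVal w π.1

/-- The trace value `α(S)` of the WTTS `S` of `σ` and `W`: the shortest distance from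
the initial states to the accepting states, i.e. `⊕_{π ∈ ARuns(S)} μ(π)`. -/
noncomputable def traceValue {X L C S : Type} [CSemiring S] [CompleteCSemiring S]
    (σ : Signal X) (W : TSWA X L C S) : S :=
  sDist (wttsStep σ W.toTSA) (wttsWeight W) (wttsQ0 W.toTSA) (wttsQF σ W.toTSA)

/-- The clocks `C ⊔ {T}`: `none` is the fresh clock `T` tracking absolute time. -/
abbrev ClockT (C : Type) : Type := Option C

/-- Symbolic states of the WSTTS: `(l, Z, ā)`. -/
abbrev SymState (X L C : Type) : Type := L × Set (ClockT C → ℝ) × List (X → ℝ)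

/-- A zone over the clock set `C'`: a set of clock valuations defined by a finite
conjunction of constraints `c ⋈ d` and `c − c' ⋈ d`. -/
def IsZone {C' : Type} (Z : Set (C' → ℝ)) : Prop :=
  ∃ atoms : List ((C' × CmpOp × ℝ) ⊕ (C' × C' × CmpOp × ℝ)),
    Z = {ν | ∀ a ∈ atoms,
      match a with
      | .inl p => p.2.1.eval (ν p.1) p.2.2
      | .inr p => p.2.2.1.eval (ν p.1 - ν p.2.1) p.2.2.2}

/-- The symbolic state space `Q^sym` of the WSTTS of `σ` and a TSWA. -/
def symQ {X L C : Type} (σ : Signal X) : Set (SymState X L C) :=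
  {q | IsZone q.2.1 ∧ q.2.1.Nonempty ∧ (∀ ν ∈ q.2.1, ν none ≤ σ.dur) ∧
    StutterFree q.2.2 ∧
    (q.2.2 = [] ∨ ∀ ν ∈ q.2.1, absCat q.2.2 [σ.valAt (ν none)] = q.2.2)}

/-- The all-zero clock valuation over `C ⊔ {T}`. -/
noncomputable def zeroValT {C : Type} : ClockT C → ℝ := fun _ => 0

/-- The initial symbolic states `Q₀^sym = {(l₀, {0⃗}, ε) | l₀ ∈ L₀}`. -/
def symQ0 {X L C : Type} (A : TSA X L C) : Set (SymState X L C) :=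
  {q | q.1 ∈ A.L₀ ∧ q.2.1 = {zeroValT} ∧ q.2.2 = []}

/-- The accepting symbolic states
`Q_F^sym = {(l_F, Z, ε) ∈ Q^sym | ∃ν ∈ Z, ν(T) = |σ|}`. -/
def symQF {X L C : Type} (σ : Signal X) (A : TSA X L C) : Set (SymState X L C) :=
  {q | q ∈ symQ σ ∧ q.1 ∈ A.LF ∧ q.2.2 = [] ∧ ∃ ν ∈ q.2.1, ν none = σ.dur}

/-- The reset `ν[ρ := 0]` of a valuation over `C ⊔ {T}` (the clock `T` is never reset). -/
noncomputable def symResetVal {C : Type} (ν : ClockT C → ℝ) (ρ : Set C) : ClockT C → ℝ :=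
  fun c => match c with
    | none => ν none
    | some c' => if c' ∈ ρ then 0 else ν (some c')

/-- The up-closure `{ν + τ | ν ∈ Z, τ > 0}` of a zone under time elapse. -/
def upClosure {C : Type} (Z : Set (ClockT C → ℝ)) : Set (ClockT C → ℝ) :=
  {ν' | ∃ ν ∈ Z, ∃ τ : ℝ, 0 < τ ∧ ν' = fun c => ν c + τ}

/-- The transition relation `→^sym` of the WSTTS of `σ` and (the TSA of) a TSWA:
a discrete transition of the TSA, a punctual time elapse, or a non-punctual time elapse. -/
def symStep {X L C : Type} (σ : Signal X) (A : TSA X L C)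
    (q q' : SymState X L C) : Prop :=
  q ∈ symQ σ ∧ q' ∈ symQ σ ∧
  ((∃ g ρ, (q.1, g, ρ, q'.1) ∈ A.Δ ∧
      q'.2.1 = {ν' | ∃ ν ∈ q.2.1, guardSat (fun c => ν (some c)) g ∧ ν' = symResetVal ν ρ} ∧
      q.2.2 ≠ [] ∧ q'.2.2 = []) ∨
   (q.1 = q'.1 ∧
      (∃ ν ∈ q.2.1, ∃ ν' ∈ q'.2.1, q'.2.2 = absCat q.2.2 (σ.valuesOn (ν none) (ν' none))) ∧
      (∃ i, 1 ≤ i ∧ i ≤ σ.len ∧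
        (q'.2.1 = upClosure q.2.1 ∩ {ν | ν none = σ.pref i} ∨
         q'.2.1 = upClosure q.2.1 ∩ {ν | σ.pref (i-1) < ν none ∧ ν none < σ.pref i}))))

/-- The weight of a WSTTS transition: `κ(Λ(l), ā)` if `ā' = ε`, and `e⊗` otherwise. -/
noncomputable def symWeight {X L C S : Type} [CSemiring S] [CompleteCSemiring S]
    (W : TSWA X L C S) (q q' : SymState X L C) : S :=
  if q'.2.2 = [] then W.κ (W.Λ q.1) q.2.2 else CSemiring.one

/-- The symbolic trace value `α^sym(S^sym)`: the shortest distance from the initial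
symbolic states to the accepting symbolic states, i.e. `⊕_{π ∈ ARuns(S^sym)} μ^sym(π)`. -/
noncomputable def symTraceValue {X L C S : Type} [CSemiring S] [CompleteCSemiring S]
    (σ : Signal X) (W : TSWA X L C S) : S :=
  sDist (symStep σ W.toTSA) (symWeight W) (symQ0 W.toTSA) (symQF σ W.toTSA)

/-- `Reach`: the initial states together with all states reachable from them. -/
def reach {Q : Type} (step : Q → Q → Prop) (init : Set Q) : Set Q :=
  {q | ∃ q0 ∈ init, Relation.ReflTransGen step q0 q}

/-- Tuples `(l, Z, ā, s)` occurring in intermediate weights. -/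
abbrev WTuple (X L C S : Type) : Type := L × Set (ClockT C → ℝ) × List (X → ℝ) × S

/-- The increment function `incr(a,t)`: maps a set `w` of tuples `(l,Z,ā,s)` to the set
of tuples `(l',Z',ā',s')` such that every `ν' ∈ Z'` satisfies `ν'(T) = t` and
`s' = ⊕_{(l,Z,ā,s)∈w} s ⊗ Dist({(l,Z,ā)},{(l',Z',ā')})` computed in the WSTTS of the
constant signal `a^t` and `W`. -/
noncomputable def incr {X L C S : Type} [CSemiring S] [CompleteCSemiring S]
    (W : TSWA X L C S) (a : X → ℝ) (t : ℝ)
    (w : Set (WTuple X L C S)) : Set (WTuple X L C S) :=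
  {p | IsZone p.2.1 ∧ StutterFree p.2.2.1 ∧ (∀ ν ∈ p.2.1, ν none = t) ∧
    p.2.2.2 = CompleteCSemiring.iSum fun q : ↥w =>
      CSemiring.mul q.1.2.2.2
        (sDist (symStep (constSignal a t) W.toTSA) (symWeight W)
          ({(q.1.1, q.1.2.1, q.1.2.2.1)} : Set (SymState X L C))
          ({(p.1, p.2.1, p.2.2.1)} : Set (SymState X L C)))}

/-- The intermediate weight `weight_i = (incr(a_i,T_i) ∘ ⋯ ∘ incr(a₁,T₁))
({(l₀,{0⃗},ε,e⊗) | l₀ ∈ L₀})`, where `T_j = τ₁ + ⋯ + τ_j`. -/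
noncomputable def weightSeq {X L C S : Type} [CSemiring S] [CompleteCSemiring S]
    (σ : Signal X) (W : TSWA X L C S) : ℕ → Set (WTuple X L C S)
  | 0 => {p | p.1 ∈ W.L₀ ∧ p.2.1 = {zeroValT} ∧ p.2.2.1 = [] ∧ p.2.2.2 = CSemiring.one}
  | i + 1 => incr W (σ.val i) (σ.pref (i+1)) (weightSeq σ W i)

/-- The extension of a clock valuation over `C` to `C ⊔ {T}`, assigning `t` to `T`. -/
def extT {C : Type} (ν : C → ℝ) (t : ℝ) : ClockT C → ℝ :=
  fun c => match c with
    | none => t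
    | some c' => ν c'

/-- The restriction `ν|_C` of a clock valuation over `C ⊔ {T}` to `C`. -/
def restrC {C : Type} (ν : ClockT C → ℝ) : C → ℝ := fun c => ν (some c)

/-- The extension of a clock valuation over `C ⊔ {T}` to `C ⊔ {T, 0}`, where the
reference clock `0` (encoded as `none`) has constant value `0`. -/
def extRef {C : Type} (ν : ClockT C → ℝ) : Option (ClockT C) → ℝ :=
  fun c => match c with
    | none => 0
    | some c' => ν c'

/-- The canonical bound `d_{Z,c,c'}` of a zone: the least constant bounding
`ν(c) − ν(c')` over `Z` (with `∞ = ⊤` when unbounded). -/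
noncomputable def zoneBound {C : Type} (Z : Set (ClockT C → ℝ))
    (c c' : Option (ClockT C)) : EReal :=
  sSup ((fun ν => ((extRef ν c - extRef ν c' : ℝ) : EReal)) '' Z)

end QTPM

/-!
A symbolic successor is built from the source zone by monotone operations: guard intersection
followed by a reset, or up-closure followed by intersection with a time slice of the signal on
which `σ(ν(T))` is constant. Enlarging the source zone therefore enlarges the successor, and the
remaining conditions on symbolic states carry over. What has to be shown is that the enlarged
successor is again a zone. Reset and up-closure are projections of zones along clocks (up-closure
after adding a clock for the delay), and zones, written as systems of difference constraints over
the clocks and a reference clock for `0`, are closed under projection by Fourier–Motzkin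
elimination.
-/

namespace QTPM

def ltOrLe (strict : Bool) (x y : ℝ) : Prop := if strict then x < y else x ≤ y

section ltOrLe

variable {s s' : Bool} {x y x' y' : ℝ}

@[simp] theorem ltOrLe_true : ltOrLe true x y ↔ x < y := Iff.rfl

@[simp] theorem ltOrLe_false : ltOrLe false x y ↔ x ≤ y := Iff.rfl

theorem ltOrLe.le (h : ltOrLe s x y) : x ≤ y := by
  cases s
  exacts [h, le_of_lt h]

theorem ltOrLe_of_lt (s : Bool) (h : x < y) : ltOrLe s x y := by
  cases s
  exacts [le_of_lt h, h]

theorem ltOrLe.of_or_left (h : ltOrLe (s || s') x y) : ltOrLe s x y := by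
  cases s <;> cases s' <;> simp_all [le_of_lt]

theorem ltOrLe.of_or_right (h : ltOrLe (s || s') x y) : ltOrLe s' x y :=
  ltOrLe.of_or_left (Bool.or_comm s s' ▸ h)

theorem ltOrLe.add (h : ltOrLe s x y) (h' : ltOrLe s' x' y') :
    ltOrLe (s || s') (x + x') (y + y') := by
  cases s <;> cases s' <;>
    simp only [ltOrLe_true, ltOrLe_false, Bool.or_true, Bool.or_false] at * <;> linarith

theorem ltOrLe_congr (h : x - y = x' - y') : ltOrLe s x y ↔ ltOrLe s x' y' := by
  cases s <;> simp only [ltOrLe_true, ltOrLe_false] <;> constructor <;> intro <;> linarith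

theorem exists_ltOrLe_between {ι κ : Type} (I : Finset ι) (J : Finset κ) (a : ι → ℝ)
    (b : κ → ℝ) (s : ι → Bool) (s' : κ → Bool)
    (h : ∀ i ∈ I, ∀ j ∈ J, ltOrLe (s i || s' j) (a i) (b j)) :
    ∃ t, (∀ i ∈ I, ltOrLe (s i) (a i) t) ∧ ∀ j ∈ J, ltOrLe (s' j) t (b j) := by
  rcases J.eq_empty_or_nonempty with rfl | hJ
  · obtain ⟨t, ht⟩ := (I.image a).bddAbove
    exact ⟨t + 1, fun i hi => ltOrLe_of_lt _ ((ht (Finset.mem_image_of_mem a hi)).trans_lt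
      (lt_add_one t)), by simp⟩
  rcases I.eq_empty_or_nonempty with rfl | hI
  · obtain ⟨t, ht⟩ := (J.image b).bddBelow
    exact ⟨t - 1, by simp, fun j hj => ltOrLe_of_lt _ ((sub_one_lt t).trans_le
      (ht (Finset.mem_image_of_mem b hj)))⟩
  obtain ⟨i₀, hi₀, hmax⟩ := I.exists_max_image a hI
  obtain ⟨j₀, hj₀, hmin⟩ := J.exists_min_image b hJ
  rcases (h i₀ hi₀ j₀ hj₀).le.lt_or_eq with hlt | heq
  · refine ⟨(a i₀ + b j₀) / 2, fun i hi => ltOrLe_of_lt _ ?_,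
      fun j hj => ltOrLe_of_lt _ ?_⟩
    · linarith [hmax i hi]
    · linarith [hmin j hj]
  · exact ⟨b j₀, fun i hi => (h i hi j₀ hj₀).of_or_left,
      fun j hj => heq ▸ (h i₀ hi₀ j hj).of_or_right⟩

end ltOrLe

structure DiffConstraint (β : Type) where
  lhs : β
  rhs : β
  strict : Bool
  bound : ℝ

namespace DiffConstraint

variable {β : Type}

def Holds (a : DiffConstraint β) (u : β → ℝ) : Prop :=
  ltOrLe a.strict (u a.lhs - u a.rhs) a.bound

@[simps]
def trans (a c : DiffConstraint β) : DiffConstraint β :=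
  ⟨a.lhs, c.rhs, a.strict || c.strict, a.bound + c.bound⟩

theorem Holds.trans {a c : DiffConstraint β} {u : β → ℝ} (ha : a.Holds u) (hc : c.Holds u)
    (h : a.rhs = c.lhs) : (a.trans c).Holds u :=
  (ltOrLe_congr (by simp only [trans_lhs, trans_rhs, trans_bound, h]; ring)).1 (ha.add hc)

section Eliminate

variable [DecidableEq β]

theorem holds_update_of_iff {a : DiffConstraint β} {x : β} (h : a.lhs = x ↔ a.rhs = x)
    (u : β → ℝ) (t : ℝ) : a.Holds (Function.update u x t) ↔ a.Holds u := by
  by_cases hl : a.lhs = x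
  · have hlr : a.lhs = a.rhs := hl.trans (h.1 hl).symm
    simp only [Holds, hlr, sub_self]
  · simp only [Holds, Function.update_of_ne hl, Function.update_of_ne (mt h.2 hl)]

/-- Fourier–Motzkin elimination of `x`. -/
def eliminate (x : β) (L : List (DiffConstraint β)) : List (DiffConstraint β) :=
  L.filter (fun a => (a.lhs = x ↔ a.rhs = x)) ++
    (L.filter fun a => a.lhs ≠ x ∧ a.rhs = x).flatMap fun a =>
      (L.filter fun c => c.lhs = x ∧ c.rhs ≠ x).map a.trans

theorem forall_holds_eliminate_iff (x : β) (L : List (DiffConstraint β)) (u : β → ℝ) :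
    (∀ a ∈ eliminate x L, a.Holds u) ↔
      ∃ t, ∀ a ∈ L, a.Holds (Function.update u x t) := by
  simp only [eliminate, List.mem_append, List.mem_filter, List.mem_flatMap, List.mem_map,
    decide_eq_true_eq]
  constructor
  · intro hs
    obtain ⟨t, hlow, hup⟩ := exists_ltOrLe_between
      (L.filter fun a => a.lhs ≠ x ∧ a.rhs = x).toFinset
      (L.filter fun c => c.lhs = x ∧ c.rhs ≠ x).toFinset
      (fun a => u a.lhs - a.bound) (fun c => u c.rhs + c.bound) strict strict
      (by
        simp only [List.mem_toFinset, List.mem_filter, decide_eq_true_eq]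
        rintro a ⟨ha, hax⟩ c ⟨hc, hcx⟩
        have hac := hs _ (.inr ⟨a, ⟨ha, hax⟩, c, ⟨hc, hcx⟩, rfl⟩)
        exact (ltOrLe_congr (by simp only [trans_lhs, trans_rhs, trans_bound]; ring)).1 hac)
    simp only [List.mem_toFinset, List.mem_filter, decide_eq_true_eq] at hlow hup
    refine ⟨t, fun a ha => ?_⟩
    by_cases hl : a.lhs = x <;> by_cases hr : a.rhs = x
    · exact (holds_update_of_iff (iff_of_true hl hr) u t).2
        (hs a (.inl ⟨ha, iff_of_true hl hr⟩))
    · simp only [Holds, hl, Function.update_self, Function.update_of_ne hr]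
      exact (ltOrLe_congr (by ring)).1 (hup a ⟨ha, hl, hr⟩)
    · simp only [Holds, hr, Function.update_self, Function.update_of_ne hl]
      exact (ltOrLe_congr (by ring)).1 (hlow a ⟨ha, hl, hr⟩)
    · exact (holds_update_of_iff (iff_of_false hl hr) u t).2
        (hs a (.inl ⟨ha, iff_of_false hl hr⟩))
  · rintro ⟨t, ht⟩ b (⟨hb, hbx⟩ | ⟨a, ⟨ha, hal, har⟩, c, ⟨hc, hcl, hcr⟩, rfl⟩)
    · exact (holds_update_of_iff hbx u t).1 (ht b hb)
    · exact (holds_update_of_iff (a := a.trans c) (iff_of_false hal hcr) u t).1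
        ((ht a ha).trans (ht c hc) (har.trans hcl.symm))

end Eliminate

end DiffConstraint

abbrev ZoneAtom (C' : Type) : Type := (C' × CmpOp × ℝ) ⊕ (C' × C' × CmpOp × ℝ)

def ZoneAtom.Holds {C' : Type} (a : ZoneAtom C') (ν : C' → ℝ) : Prop :=
  match a with
  | .inl p => p.2.1.eval (ν p.1) p.2.2
  | .inr p => p.2.2.1.eval (ν p.1 - ν p.2.1) p.2.2.2

theorem isZone_iff_atoms {C' : Type} {Z : Set (C' → ℝ)} :
    IsZone Z ↔ ∃ atoms : List (ZoneAtom C'), Z = {ν | ∀ a ∈ atoms, a.Holds ν} :=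
  Iff.rfl

section ZoneAtom

variable {C' C'' : Type} {Z Z₁ Z₂ : Set (C' → ℝ)}

theorem IsZone.inter (h₁ : IsZone Z₁) (h₂ : IsZone Z₂) : IsZone (Z₁ ∩ Z₂) := by
  obtain ⟨A₁, rfl⟩ := isZone_iff_atoms.1 h₁
  obtain ⟨A₂, rfl⟩ := isZone_iff_atoms.1 h₂
  refine isZone_iff_atoms.2 ⟨A₁ ++ A₂, ?_⟩
  ext ν
  simp only [Set.mem_inter_iff, Set.mem_ofPred_eq, List.mem_append, or_imp, forall_and]

theorem isZone_setOf_eval (c : C') (op : CmpOp) (d : ℝ) :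
    IsZone {ν : C' → ℝ | op.eval (ν c) d} :=
  isZone_iff_atoms.2 ⟨[.inl (c, op, d)], by ext ν; simp [ZoneAtom.Holds]⟩

theorem isZone_setOf_eq (c : C') (d : ℝ) : IsZone {ν : C' → ℝ | ν c = d} := by
  convert (isZone_setOf_eval c .le d).inter (isZone_setOf_eval c .ge d) using 1
  ext ν
  exact le_antisymm_iff

theorem isZone_guardSat {C : Type} (g : Guard C) :
    IsZone {ν : ClockT C → ℝ | guardSat (fun c => ν (some c)) g} :=
  isZone_iff_atoms.2 ⟨g.map fun p => .inl (some p.1, p.2.1, p.2.2), by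
    ext ν; simp only [List.forall_mem_map]; rfl⟩

def ZoneAtom.comap (f : C' → C'') : ZoneAtom C' → ZoneAtom C''
  | .inl (c, op, d) => .inl (f c, op, d)
  | .inr (c, c', op, d) => .inr (f c, f c', op, d)

theorem ZoneAtom.holds_comap (f : C' → C'') (a : ZoneAtom C') (ν : C'' → ℝ) :
    (a.comap f).Holds ν ↔ a.Holds (ν ∘ f) := by
  rcases a with ⟨c, op, d⟩ | ⟨c, c', op, d⟩ <;> rfl

theorem IsZone.preimage_comp (f : C' → C'') (hZ : IsZone Z) :
    IsZone {ν : C'' → ℝ | ν ∘ f ∈ Z} := by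
  obtain ⟨A, rfl⟩ := isZone_iff_atoms.1 hZ
  refine isZone_iff_atoms.2 ⟨A.map (ZoneAtom.comap f), ?_⟩
  ext ν
  simp only [Set.mem_ofPred_eq, List.forall_mem_map, ZoneAtom.holds_comap]

def ZoneAtom.relative : ZoneAtom C' → ZoneAtom (Option C')
  | .inl (c, op, d) => .inr (some c, none, op, d)
  | .inr (c, c', op, d) => .inr (some c, some c', op, d)

theorem ZoneAtom.holds_relative (a : ZoneAtom C') (μ : Option C' → ℝ) :
    a.relative.Holds μ ↔ a.Holds (fun c => μ (some c) - μ none) := by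
  rcases a with ⟨c, op, d⟩ | ⟨c, c', op, d⟩
  · rfl
  · simp only [ZoneAtom.relative, ZoneAtom.Holds, sub_sub_sub_cancel_right]

theorem IsZone.preimage_sub (hZ : IsZone Z) :
    IsZone {μ : Option C' → ℝ | (fun c => μ (some c) - μ none) ∈ Z} := by
  obtain ⟨A, rfl⟩ := isZone_iff_atoms.1 hZ
  refine isZone_iff_atoms.2 ⟨A.map ZoneAtom.relative, ?_⟩
  ext μ
  simp only [Set.mem_ofPred_eq, List.forall_mem_map, ZoneAtom.holds_relative]

end ZoneAtom

namespace DiffConstraint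

variable {β : Type}

def ofCmp (p q : β) : CmpOp → ℝ → DiffConstraint β
  | .lt, d => ⟨p, q, true, d⟩
  | .le, d => ⟨p, q, false, d⟩
  | .gt, d => ⟨q, p, true, -d⟩
  | .ge, d => ⟨q, p, false, -d⟩

theorem holds_ofCmp (p q : β) (op : CmpOp) (d : ℝ) (u : β → ℝ) :
    (ofCmp p q op d).Holds u ↔ op.eval (u p - u q) d := by
  cases op <;> simp only [ofCmp, Holds, ltOrLe_true, ltOrLe_false, CmpOp.eval] <;>
    constructor <;> intro <;> linarith

/-- A constraint between clocks of `C ⊔ {T}` and the reference clock `none`, which stands for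
the constant `0` (see `extRef`); a constraint not involving clocks is encoded as `T - T ⋈ d`. -/
def toZoneAtom {C : Type} (a : DiffConstraint (Option (ClockT C))) : ZoneAtom (ClockT C) :=
  match a.lhs, a.rhs with
  | some c, some c' => .inr (c, c', cond a.strict .lt .le, a.bound)
  | some c, none => .inl (c, cond a.strict .lt .le, a.bound)
  | none, some c => .inl (c, cond a.strict .gt .ge, -a.bound)
  | none, none => .inr (none, none, cond a.strict .lt .le, a.bound)

theorem holds_toZoneAtom {C : Type} (a : DiffConstraint (Option (ClockT C)))
    (ν : ClockT C → ℝ) : a.toZoneAtom.Holds ν ↔ a.Holds (extRef ν) := by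
  obtain ⟨_ | c, _ | c', _ | _, d⟩ := a <;>
    simp only [toZoneAtom, Holds, ZoneAtom.Holds, CmpOp.eval, extRef, cond_true, cond_false,
      ltOrLe_true, ltOrLe_false, sub_self, zero_sub] <;>
    constructor <;> intro <;> linarith

end DiffConstraint

def ZoneAtom.toDiffConstraint {C : Type} :
    ZoneAtom (ClockT C) → DiffConstraint (Option (ClockT C))
  | .inl (c, op, d) => .ofCmp (some c) none op d
  | .inr (c, c', op, d) => .ofCmp (some c) (some c') op d

theorem ZoneAtom.holds_toDiffConstraint {C : Type} (a : ZoneAtom (ClockT C))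
    (ν : ClockT C → ℝ) : a.toDiffConstraint.Holds (extRef ν) ↔ a.Holds ν := by
  rcases a with ⟨c, op, d⟩ | ⟨c, c', op, d⟩ <;>
    simp [toDiffConstraint, DiffConstraint.holds_ofCmp, extRef, ZoneAtom.Holds]

theorem isZone_iff_diffConstraints {C : Type} {Z : Set (ClockT C → ℝ)} :
    IsZone Z ↔ ∃ L : List (DiffConstraint (Option (ClockT C))),
      Z = {ν | ∀ a ∈ L, a.Holds (extRef ν)} := by
  rw [isZone_iff_atoms]
  constructor
  · rintro ⟨A, rfl⟩
    exact ⟨A.map ZoneAtom.toDiffConstraint, by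
      ext ν; simp only [Set.mem_ofPred_eq, List.forall_mem_map, ZoneAtom.holds_toDiffConstraint]⟩
  · rintro ⟨L, rfl⟩
    exact ⟨L.map DiffConstraint.toZoneAtom, by
      ext ν; simp only [Set.mem_ofPred_eq, List.forall_mem_map, DiffConstraint.holds_toZoneAtom]⟩

section Clocks

variable {C : Type} {Z Z₁ Z₂ : Set (ClockT C → ℝ)}

theorem extRef_update (ν : ClockT C → ℝ) (c : ClockT C) (t : ℝ) :
    extRef (Function.update ν c t) = Function.update (extRef ν) (some c) t := by
  funext b
  rcases b with _ | b <;> simp [extRef, Function.update_apply]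

theorem IsZone.exists_update (hZ : IsZone Z) (c : ClockT C) :
    IsZone {ν | ∃ t, Function.update ν c t ∈ Z} := by
  obtain ⟨L, rfl⟩ := isZone_iff_diffConstraints.1 hZ
  refine isZone_iff_diffConstraints.2 ⟨DiffConstraint.eliminate (some c) L, ?_⟩
  ext ν
  simp only [Set.mem_ofPred_eq, extRef_update, DiffConstraint.forall_holds_eliminate_iff]

theorem image_update_eq (c : ClockT C) (d : ℝ) :
    (Function.update · c d) '' Z =
      {ν | ν c = d} ∩ {ν | ∃ t, Function.update ν c t ∈ Z} := by
  ext ν'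
  simp only [Set.mem_image, Set.mem_inter_iff, Set.mem_ofPred_eq]
  constructor
  · rintro ⟨ν, hν, rfl⟩
    refine ⟨Function.update_self c d ν, ν c, ?_⟩
    rwa [Function.update_idem, Function.update_eq_self]
  · rintro ⟨hc, t, ht⟩
    exact ⟨_, ht, by rw [Function.update_idem, ← hc, Function.update_eq_self]⟩

theorem IsZone.image_update (hZ : IsZone Z) (c : ClockT C) (d : ℝ) :
    IsZone ((Function.update · c d) '' Z) := by
  rw [image_update_eq]
  exact (isZone_setOf_eq c d).inter (hZ.exists_update c)

theorem symResetVal_empty (ν : ClockT C → ℝ) : symResetVal ν ∅ = ν := by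
  funext k
  rcases k with _ | k <;> simp [symResetVal]

theorem symResetVal_insert (ν : ClockT C → ℝ) (c : C) (ρ : Set C) :
    symResetVal ν (insert c ρ) = Function.update (symResetVal ν ρ) (some c) 0 := by
  funext k
  rcases k with _ | k
  · simp [symResetVal]
  · by_cases hk : k = c
    · subst hk; simp [symResetVal]
    · simp [symResetVal, hk]

theorem IsZone.image_symResetVal (hZ : IsZone Z) {ρ : Set C} (hρ : ρ.Finite) :
    IsZone ((symResetVal · ρ) '' Z) := by
  induction ρ, hρ using Set.Finite.induction_on with
  | empty => simpa only [symResetVal_empty, Set.image_id'] using hZ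
  | @insert c ρ _ _ ih =>
    simp only [symResetVal_insert]
    rw [← Set.image_image (Function.update · (some c) 0)]
    exact ih.image_update _ _

def guardedReset (Z : Set (ClockT C → ℝ)) (g : Guard C) (ρ : Set C) : Set (ClockT C → ℝ) :=
  {ν' | ∃ ν ∈ Z, guardSat (fun c => ν (some c)) g ∧ ν' = symResetVal ν ρ}

theorem guardedReset_mono (h : Z₁ ⊆ Z₂) (g : Guard C) (ρ : Set C) :
    guardedReset Z₁ g ρ ⊆ guardedReset Z₂ g ρ := by
  rintro _ ⟨ν, hν, hg, rfl⟩
  exact ⟨ν, h hν, hg, rfl⟩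

theorem IsZone.guardedReset (hZ : IsZone Z) (g : Guard C) {ρ : Set C} (hρ : ρ.Finite) :
    IsZone (guardedReset Z g ρ) := by
  have : QTPM.guardedReset Z g ρ =
      (symResetVal · ρ) '' (Z ∩ {ν | guardSat (fun c => ν (some c)) g}) := by
    ext ν'
    simp only [QTPM.guardedReset, Set.mem_image, Set.mem_inter_iff, Set.mem_ofPred_eq, and_assoc,
      eq_comm (a := ν')]
  rw [this]
  exact (hZ.inter (isZone_guardSat g)).image_symResetVal hρ

theorem upClosure_mono (h : Z₁ ⊆ Z₂) : upClosure Z₁ ⊆ upClosure Z₂ := by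
  rintro _ ⟨ν, hν, τ, hτ, rfl⟩
  exact ⟨ν, h hν, τ, hτ, rfl⟩

theorem mem_upClosure_iff {ν' : ClockT C → ℝ} :
    ν' ∈ upClosure Z ↔ ∃ τ, (fun k => ν' k - τ) ∈ Z ∧ 0 < τ := by
  constructor
  · rintro ⟨ν, hν, τ, hτ, rfl⟩
    exact ⟨τ, by simpa using hν, hτ⟩
  · rintro ⟨τ, hν, hτ⟩
    exact ⟨_, hν, τ, hτ, by simp⟩

/-- With an extra clock `none` recording the elapsed delay `τ`, the up-closure is the projection
of the zone `{μ | 0 < μ none ∧ μ - μ none ∈ Z}` along `none`. -/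
theorem IsZone.upClosure (hZ : IsZone Z) : IsZone (upClosure Z) := by
  have hdelay : IsZone {μ : ClockT (ClockT C) → ℝ |
      (fun k => μ (some k) - μ none) ∈ Z ∧ 0 < μ none} :=
    hZ.preimage_sub.inter (isZone_setOf_eval none .gt 0)
  convert (hdelay.exists_update none).preimage_comp (fun k => k.getD none) using 1
  ext ν'
  simp [mem_upClosure_iff]

end Clocks

namespace Signal

variable {X : Type}

theorem duration_nonneg (σ : Signal X) {τ : ℝ} (h : τ ∈ σ.entries.map Prod.snd) :
    0 ≤ τ := by
  obtain ⟨e, he, rfl⟩ := List.mem_map.1 h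
  exact (σ.pos e he).le

theorem pref_mono (σ : Signal X) : Monotone σ.pref := fun _ j hij =>
  ((List.take_sublist_take_left hij).map Prod.snd).sum_le_sum fun _ hτ =>
    σ.duration_nonneg (((List.take_sublist j _).map Prod.snd).subset hτ)

theorem pref_le_dur (σ : Signal X) (i : ℕ) : σ.pref i ≤ σ.dur :=
  ((List.take_sublist i _).map Prod.snd).sum_le_sum fun _ => σ.duration_nonneg

theorem valAt_of_lt (σ : Signal X) {i : ℕ} (hi₁ : 1 ≤ i) (hi₂ : i ≤ σ.len) {t : ℝ}
    (hl : σ.pref (i - 1) < t) (hu : t < σ.pref i) : σ.valAt t = σ.val (i - 1) := by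
  have hlen : i - 1 < (List.range σ.len).length := by rw [List.length_range]; omega
  suffices (List.range σ.len).findIdx (fun j => decide (t < σ.pref (j + 1))) = i - 1 by
    rw [valAt, this]
  rw [List.findIdx_eq hlen]
  refine ⟨by simpa [Nat.sub_add_cancel hi₁] using hu, fun j hj => ?_⟩
  simpa using (σ.pref_mono (by omega : j + 1 ≤ i - 1)).trans hl.le

end Signal

section SymbolicStates

variable {X L C : Type} {σ : Signal X} {l l' : L} {ā : List (X → ℝ)}
  {Z Z₁ Z₂ P : Set (ClockT C → ℝ)}

theorem mem_symQ_of_subset (h₁ : (l, Z₁, ā) ∈ symQ σ) (hsub : Z₁ ⊆ Z₂)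
    (hZ₂ : IsZone Z₂) (hdur : ∀ ν ∈ Z₂, ν none ≤ σ.dur)
    (hval : ∀ ν ∈ Z₂, ∀ ν' ∈ Z₂, σ.valAt (ν none) = σ.valAt (ν' none)) :
    (l, Z₂, ā) ∈ symQ σ := by
  obtain ⟨-, ⟨ν₀, hν₀⟩, -, hsf, hā⟩ := h₁
  refine ⟨hZ₂, ⟨ν₀, hsub hν₀⟩, hdur, hsf, hā.imp_right fun h ν hν => ?_⟩
  rw [hval ν hν ν₀ (hsub hν₀)]
  exact h ν₀ hν₀

theorem mem_symQ_guardedReset (hQ : (l, Z, ā) ∈ symQ σ) (g : Guard C) {ρ : Set C}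
    (hρ : ρ.Finite) (hne : (guardedReset Z g ρ).Nonempty) :
    (l', guardedReset Z g ρ, []) ∈ symQ σ := by
  refine ⟨hQ.1.guardedReset g hρ, hne, ?_, List.isChain_nil, .inl rfl⟩
  rintro _ ⟨ν, hν, -, rfl⟩
  exact hQ.2.2.1 ν hν

theorem mem_symQ_upClosure_inter (h₁ : (l, upClosure Z₁ ∩ P, ā) ∈ symQ σ)
    (hsub : Z₁ ⊆ Z₂) (hZ₂ : IsZone Z₂) (hP : IsZone P) (hdur : ∀ ν ∈ P, ν none ≤ σ.dur)
    (hval : ∀ ν ∈ P, ∀ ν' ∈ P, σ.valAt (ν none) = σ.valAt (ν' none)) :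
    (l, upClosure Z₂ ∩ P, ā) ∈ symQ σ :=
  mem_symQ_of_subset h₁ (Set.inter_subset_inter_left P (upClosure_mono hsub))
    (hZ₂.upClosure.inter hP) (fun ν hν => hdur ν hν.2)
    fun ν hν ν' hν' => hval ν hν.2 ν' hν'.2

end SymbolicStates

theorem statement7_general {X L C S : Type} [Finite C]
    [CSemiring S] [CompleteCSemiring S]
    (W : TSWA X L C S) (σ : Signal X)
    (q q' : SymState X L C) (h : symStep σ W.toTSA q q')
    (Z₂ : Set (ClockT C → ℝ)) (hQ : (q.1, Z₂, q.2.2) ∈ symQ σ) (hsub : q.2.1 ⊆ Z₂) :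
    ∃ Z₂' : Set (ClockT C → ℝ), (q'.1, Z₂', q'.2.2) ∈ symQ σ ∧ q'.2.1 ⊆ Z₂' ∧
      symStep σ W.toTSA (q.1, Z₂, q.2.2) (q'.1, Z₂', q'.2.2) := by
  obtain ⟨l, Z₁, ā⟩ := q
  obtain ⟨l', Z₁', ā'⟩ := q'
  obtain ⟨-, hq', hstep⟩ := h
  dsimp only at hQ hsub hq' hstep ⊢
  rcases hstep with ⟨g, ρ, hΔ, rfl, hā, rfl⟩ |
    ⟨rfl, ⟨ν, hν, ν', hν', rfl⟩, i, hi₁, hi₂, rfl | rfl⟩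
  · have hsub' := guardedReset_mono hsub g ρ
    have hmem := mem_symQ_guardedReset (l' := l') hQ g (Set.toFinite ρ) (hq'.2.1.mono hsub')
    exact ⟨_, hmem, hsub', hQ, hmem, .inl ⟨g, ρ, hΔ, rfl, hā, rfl⟩⟩
  · have hmem := mem_symQ_upClosure_inter hq' hsub hQ.1 (isZone_setOf_eq none (σ.pref i))
      (fun ν hν => hν ▸ σ.pref_le_dur i)
      fun ν hν ν' hν' => congrArg σ.valAt (hν.trans hν'.symm)
    have hsub' := Set.inter_subset_inter_left {ν | ν none = σ.pref i} (upClosure_mono hsub)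
    exact ⟨_, hmem, hsub', hQ, hmem,
      .inr ⟨rfl, ⟨ν, hsub hν, ν', hsub' hν', rfl⟩, i, hi₁, hi₂, .inl rfl⟩⟩
  · have hmem := mem_symQ_upClosure_inter hq' hsub hQ.1
      ((isZone_setOf_eval none .gt _).inter (isZone_setOf_eval none .lt _))
      (fun ν hν => hν.2.le.trans (σ.pref_le_dur i)) fun ν hν ν' hν' => by
        rw [σ.valAt_of_lt hi₁ hi₂ hν.1 hν.2, σ.valAt_of_lt hi₁ hi₂ hν'.1 hν'.2]
    have hsub' := Set.inter_subset_inter_left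
      {ν : ClockT C → ℝ | σ.pref (i - 1) < ν none ∧ ν none < σ.pref i} (upClosure_mono hsub)
    exact ⟨_, hmem, hsub', hQ, hmem,
      .inr ⟨rfl, ⟨ν, hsub hν, ν', hsub' hν', rfl⟩, i, hi₁, hi₂, .inr rfl⟩⟩

/-- In the WSTTS of `σ` and `W`: if `((l,Z₁,ā),(l',Z₁',ā')) ∈ →^sym`
and `(l,Z₂,ā) ∈ Q^sym` with `Z₁ ⊆ Z₂`, then there exists `(l',Z₂',ā') ∈ Q^sym` with
`Z₁' ⊆ Z₂'` and `((l,Z₂,ā),(l',Z₂',ā')) ∈ →^sym`. -/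
theorem statement7 {X L C S : Type} [Finite X] [Finite L] [Finite C]
    [CSemiring S] [CompleteCSemiring S]
    (W : TSWA X L C S) (σ : Signal X)
    (q q' : SymState X L C) (h : symStep σ W.toTSA q q')
    (Z₂ : Set (ClockT C → ℝ)) (hQ : (q.1, Z₂, q.2.2) ∈ symQ σ) (hsub : q.2.1 ⊆ Z₂) :
    ∃ Z₂' : Set (ClockT C → ℝ), (q'.1, Z₂', q'.2.2) ∈ symQ σ ∧ q'.2.1 ⊆ Z₂' ∧
      symStep σ W.toTSA (q.1, Z₂, q.2.2) (q'.1, Z₂', q'.2.2) :=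
  statement7_general W σ q q' h Z₂ hQ hsub

end QTPM
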